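/- arXiv:2003.09460 — 4 statements merged into one kernel-verified Lean document; each statement's English description precedes it below -/
import Mathlib

section
/- If Z is uniform on an interval independent of another covariate W, and the conditional hazard of T given (Z,W) is λ₀(t) + β₁Z + β₂W, then the marginal (over Z) conditional survival function is S(t|W) = exp(-Λ₀(t) - β₂Wt)·E[exp(-β₁Zt)], so that the conditional hazard of T given W is λ₀(t) + β₂W + h(t) where h(t) = -d/dt log E[exp(-β₁Zt)] does not depend on W (collapsibility of the additive hazards model). -/
open MeasureTheory Real Set

/-- collapsibility: If `Z` is uniform on an interval `[a,b]` (independent of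
the covariate `W`) and the conditional hazard of `T` given `(Z,W)` is
`λ₀(t) + β₁Z + β₂W`, then the marginal (over `Z`) conditional survival function is
`S(t|w) = exp(-Λ₀(t) - β₂wt) · E[exp(-β₁Zt)]`, and the conditional hazard of `T` given
`W = w` alone is `λ₀(t) + β₂w + h(t)`, where
`h(t) = -d/dt log E[exp(-β₁Zt)]` does not depend on `w`. -/
theorem additive_hazards_collapsible
    (a b : ℝ) (hab : a < b)
    (ν : Measure ℝ) (hν : ν = (ENNReal.ofReal (b - a))⁻¹ • volume.restrict (Icc a b))
    (lam0 Lam0 : ℝ → ℝ) (hLam : ∀ t, HasDerivAt Lam0 (lam0 t) t)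
    (β1 β2 : ℝ)
    (S : ℝ → ℝ → ℝ)
    (hS : ∀ w t, S w t = ∫ z, Real.exp (-Lam0 t - β1 * z * t - β2 * w * t) ∂ν)
    (h : ℝ → ℝ)
    (hh : ∀ t, h t = -deriv (fun s => Real.log (∫ z, Real.exp (-β1 * z * s) ∂ν)) t) :
    ∀ w t, S w t = Real.exp (-Lam0 t - β2 * w * t) * (∫ z, Real.exp (-β1 * z * t) ∂ν) ∧
      -(deriv (fun s => Real.log (S w s)) t) = lam0 t + β2 * w + h t := by
  have hba : 0 < b - a := sub_pos.mpr hab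
  have hcne : (ENNReal.ofReal (b - a))⁻¹ ≠ ⊤ := by
    simp [ENNReal.inv_ne_top, ENNReal.ofReal_pos.mpr hba, ne_of_gt]
  -- integrability over ν of continuous functions (on the compact support)
  have hint : ∀ f : ℝ → ℝ, Continuous f → Integrable f ν := by
    intro f hf
    rw [hν]
    exact ((hf.integrableOn_Icc).smul_measure hcne)
  have hc : ∀ s : ℝ, Continuous fun z : ℝ => Real.exp (-β1 * z * s) :=
    fun s => ((continuous_const.mul continuous_id).mul continuous_const).rexp
  set I : ℝ → ℝ := fun s => ∫ z, Real.exp (-β1 * z * s) ∂ν with hI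
  -- positivity of I
  have hIpos : ∀ s, 0 < I s := by
    intro s
    rw [hI]
    simp only [hν, integral_smul_measure]
    apply mul_pos
    · simp only [ENNReal.toReal_inv]
      apply inv_pos.mpr
      simp [ENNReal.toReal_ofReal hba.le, hba]
    · rw [setIntegral_pos_iff_support_of_nonneg_ae]
      · have : Function.support (fun z => Real.exp (-β1 * z * s)) = Set.univ := by
          ext z; simp [Real.exp_ne_zero]
        rw [this]
        simp [Real.volume_Icc, hba]
      · filter_upwards with z using (Real.exp_pos _).le
      · exact (hc s).integrableOn_Icc
  -- derivative of I
  have hIderiv : ∀ t : ℝ, HasDerivAt I (∫ z, (-β1 * z) * Real.exp (-β1 * z * t) ∂ν) t := by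
    intro t
    set B : ℝ := (|β1| * (|a| + |b|)) * Real.exp (|β1| * (|a| + |b|) * (|t| + 1)) with hB
    have key := hasDerivAt_integral_of_dominated_loc_of_deriv_le
      (F := fun s z => Real.exp (-β1 * z * s))
      (F' := fun s z => (-β1 * z) * Real.exp (-β1 * z * s))
      (μ := ν) (x₀ := t) (bound := fun _ => B) (Metric.ball_mem_nhds t one_pos)
      (Filter.Eventually.of_forall fun x => (hc x).aestronglyMeasurable)
      (hint _ (hc t))
      (((continuous_const.mul continuous_id).mul (hc t)).aestronglyMeasurable)
      ?_ (hint _ continuous_const)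
      ?_
    · exact key.2
    · -- bound
      rw [hν]
      refine Measure.ae_smul_measure ?_ _
      rw [ae_restrict_iff' measurableSet_Icc]
      filter_upwards with z hz x hx
      have hzb : |z| ≤ |a| + |b| := by
        rcases hz with ⟨h1, h2⟩
        rcases abs_cases z with ⟨he, _⟩ | ⟨he, _⟩ <;> rcases abs_cases a with ⟨ha', _⟩ | ⟨ha', _⟩ <;>
          rcases abs_cases b with ⟨hb', _⟩ | ⟨hb', _⟩ <;> nlinarith [abs_nonneg a, abs_nonneg b]
      have hxb : |x| ≤ |t| + 1 := by
        have := mem_ball_iff_norm.mp hx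
        rw [Real.norm_eq_abs] at this
        calc |x| = |t + (x - t)| := by ring_nf
          _ ≤ |t| + |x - t| := abs_add_le _ _
          _ ≤ |t| + 1 := by linarith [abs_sub_comm x t ▸ this.le]
      rw [norm_mul, Real.norm_eq_abs, Real.norm_eq_abs, Real.abs_exp, hB]
      apply mul_le_mul
      · rw [abs_mul, abs_neg]
        exact mul_le_mul_of_nonneg_left hzb (abs_nonneg _)
      · apply Real.exp_le_exp.mpr
        calc -β1 * z * x ≤ |(-β1) * z * x| := le_abs_self _
          _ = |β1| * |z| * |x| := by rw [abs_mul, abs_mul, abs_neg]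
          _ ≤ |β1| * (|a| + |b|) * (|t| + 1) := by
              apply mul_le_mul (mul_le_mul_of_nonneg_left hzb (abs_nonneg _)) hxb
                (abs_nonneg _) (by positivity)
      · positivity
      · positivity
    · -- differentiability
      filter_upwards with z x _
      have : HasDerivAt (fun s : ℝ => -β1 * z * s) (-β1 * z) x := by
        simpa using (hasDerivAt_id x).const_mul (-β1 * z)
      simpa [mul_comm] using this.exp
  -- main proof
  intro w t
  -- claim 1
  have claim1 : ∀ s, S w s = Real.exp (-Lam0 s - β2 * w * s) * I s := by
    intro s
    rw [hS, hI, ← integral_const_mul]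
    congr 1
    ext z
    rw [← Real.exp_add]
    ring_nf
  refine ⟨claim1 t, ?_⟩
  -- log S as a sum
  have hlog : (fun s => Real.log (S w s)) =
      fun s => (-Lam0 s - β2 * w * s) + Real.log (I s) := by
    funext s
    rw [claim1 s, Real.log_mul (Real.exp_ne_zero _) (hIpos s).ne', Real.log_exp]
  have hdlogI : HasDerivAt (fun s => Real.log (I s))
      ((∫ z, (-β1 * z) * Real.exp (-β1 * z * t) ∂ν) / I t) t :=
    (hIderiv t).log (hIpos t).ne'
  have hd1 : HasDerivAt (fun s => -Lam0 s - β2 * w * s) (-(lam0 t) - β2 * w) t := by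
    exact ((hLam t).neg).sub (by simpa using (hasDerivAt_id t).const_mul (β2 * w))
  have hdS : HasDerivAt (fun s => Real.log (S w s))
      ((-(lam0 t) - β2 * w) + (∫ z, (-β1 * z) * Real.exp (-β1 * z * t) ∂ν) / I t) t := by
    rw [hlog]; exact hd1.add hdlogI
  rw [hdS.deriv, hh]
  have : deriv (fun s => Real.log (∫ z, Real.exp (-β1 * z * s) ∂ν)) t =
      (∫ z, (-β1 * z) * Real.exp (-β1 * z * t) ∂ν) / I t := hdlogI.deriv
  rw [this]
  ring
end

section
/- For the additive hazards model with λ₀(t) = 1 and Z ~ Bernoulli(1/2), the explained variation Ω²(β) = Var(E[T|Z])/Var(T) is strictly increasing in |β| on β > -1, β ≠ 0; specifically its derivative with respect to |β| equals |β|(2+β) / (4·Var(T)²·(1+β)⁴) > 0. -/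
/-!
After clearing the powers of `1 + β`, `Var(E[T|Z]) = β² / (4(1+β)²)` and
`Var(T) = (3β² + 4β + 4) / (4(1+β)²)`, so `Ω²(β) = β² / (3β² + 4β + 4)`. The derivative of this
rational function is `4β(β+2) / (3β² + 4β + 4)²`, which has the sign of `β` on `β > -2`; hence `Ω²`
decreases on `[-2, 0]` and increases on `[0, ∞)`, i.e. it increases with `|β|` on either side of `0`.
-/

open Real Set

lemma Real.sign_mul_abs (x : ℝ) : Real.sign x * |x| = x := by
  rcases lt_trichotomy x 0 with hx | rfl | hx
  · rw [Real.sign_of_neg hx, abs_of_neg hx]; ring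
  · simp
  · rw [Real.sign_of_pos hx, abs_of_pos hx, one_mul]

noncomputable section

namespace AdditiveHazards

def varCondMean (β : ℝ) : ℝ := (1/4) * (1 - 1/(1+β))^2

def varTotal (β : ℝ) : ℝ := (1/2) * (1 + 1/(1+β)^2) + (1/4) * (1 - 1/(1+β))^2

def explainedVariation (β : ℝ) : ℝ := varCondMean β / varTotal β

lemma quadratic_pos (x : ℝ) : 0 < 3*x^2 + 4*x + 4 := by
  nlinarith [sq_nonneg (x + 2)]

lemma varTotal_eq {β : ℝ} (hβ : 1 + β ≠ 0) :
    varTotal β = (3*β^2 + 4*β + 4) / (4*(1+β)^2) := by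
  unfold varTotal
  field_simp
  ring

lemma varTotal_pos {β : ℝ} (hβ : 1 + β ≠ 0) : 0 < varTotal β := by
  rw [varTotal_eq hβ]
  have := quadratic_pos β
  positivity

lemma explainedVariation_eq {β : ℝ} (hβ : 1 + β ≠ 0) :
    explainedVariation β = β^2 / (3*β^2 + 4*β + 4) := by
  have hq := (quadratic_pos β).ne'
  rw [explainedVariation, varTotal_eq hβ, varCondMean]
  field_simp
  ring

lemma hasDerivAt_sq_div_quadratic (x : ℝ) :
    HasDerivAt (fun x : ℝ => x^2 / (3*x^2 + 4*x + 4))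
      (4*x*(x+2) / (3*x^2 + 4*x + 4)^2) x := by
  have hq := (quadratic_pos x).ne'
  have hnum : HasDerivAt (fun x : ℝ => x^2) (2*x) x := by
    simpa using hasDerivAt_pow 2 x
  have hden : HasDerivAt (fun x : ℝ => 3*x^2 + 4*x + 4) (6*x + 4) x :=
    ((((hasDerivAt_pow 2 x).const_mul 3).add ((hasDerivAt_id x).const_mul 4)).add_const 4)
      |>.congr_deriv (by norm_num; ring)
  exact (hnum.div hden hq).congr_deriv (by ring)

lemma strictMonoOn_sq_div_quadratic :
    StrictMonoOn (fun x : ℝ => x^2 / (3*x^2 + 4*x + 4)) (Ici 0) := by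
  refine strictMonoOn_of_deriv_pos (convex_Ici 0)
    (fun x _ => (hasDerivAt_sq_div_quadratic x).continuousAt.continuousWithinAt) fun x hx => ?_
  rw [interior_Ici, mem_Ioi] at hx
  rw [(hasDerivAt_sq_div_quadratic x).deriv]
  have := quadratic_pos x
  positivity

lemma strictAntiOn_sq_div_quadratic :
    StrictAntiOn (fun x : ℝ => x^2 / (3*x^2 + 4*x + 4)) (Icc (-2) 0) := by
  refine strictAntiOn_of_deriv_neg (convex_Icc (-2) 0)
    (fun x _ => (hasDerivAt_sq_div_quadratic x).continuousAt.continuousWithinAt) fun x hx => ?_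
  rw [interior_Icc, mem_Ioo] at hx
  rw [(hasDerivAt_sq_div_quadratic x).deriv]
  have hneg : 4*x*(x+2) < 0 := by nlinarith
  exact div_neg_of_neg_of_pos hneg (pow_pos (quadratic_pos x) 2)

lemma explainedVariation_lt_of_abs_lt {β₁ β₂ : ℝ} (h₁ : -1 < β₁) (h₂ : -1 < β₂)
    (hsign : 0 ≤ β₁ * β₂) (habs : |β₁| < |β₂|) :
    explainedVariation β₁ < explainedVariation β₂ := by
  rw [explainedVariation_eq (by linarith), explainedVariation_eq (by linarith)]
  rcases lt_trichotomy β₂ 0 with hβ₂ | rfl | hβ₂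
  · have hβ₁ : β₁ ≤ 0 := by nlinarith
    rw [abs_of_nonpos hβ₁, abs_of_neg hβ₂] at habs
    exact strictAntiOn_sq_div_quadratic ⟨by linarith, hβ₂.le⟩ ⟨by linarith, hβ₁⟩ (by linarith)
  · exact absurd habs (by simp)
  · have hβ₁ : 0 ≤ β₁ := by nlinarith
    rw [abs_of_nonneg hβ₁, abs_of_pos hβ₂] at habs
    exact strictMonoOn_sq_div_quadratic (mem_Ici.2 hβ₁) (mem_Ici.2 hβ₂.le) habs

lemma hasDerivAt_explainedVariation {β : ℝ} (hβ : 1 + β ≠ 0) :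
    HasDerivAt explainedVariation (4*β*(β+2) / (3*β^2 + 4*β + 4)^2) β := by
  refine (hasDerivAt_sq_div_quadratic β).congr_of_eventuallyEq ?_
  filter_upwards [(continuous_const.add continuous_id).continuousAt.eventually_ne hβ]
    with x hx
  exact explainedVariation_eq hx

lemma div_quadratic_sq_eq_sign_mul_abs_div_varTotal {β : ℝ} (hβ : 1 + β ≠ 0) :
    4*β*(β+2) / (3*β^2 + 4*β + 4)^2
      = Real.sign β * (|β| * (2 + β) / (4 * (varTotal β)^2 * (1+β)^4)) := by
  have hq := (quadratic_pos β).ne'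
  rw [← mul_div_assoc, ← mul_assoc, Real.sign_mul_abs, varTotal_eq hβ]
  field_simp
  ring

end AdditiveHazards

end

open AdditiveHazards

/-- For the additive hazards model with `λ₀(t) = 1` and `Z ~ Bernoulli(1/2)`
(so `T|Z=0 ~ Exp(1)`, `T|Z=1 ~ Exp(1+β)`, with
`Var(E[T|Z]) = (1/4)(1 - 1/(1+β))²` and
`Var(T) = (1/2)(1 + 1/(1+β)²) + (1/4)(1 - 1/(1+β))²`),
the explained variation `Ω²(β) = Var(E[T|Z])/Var(T)` is strictly increasing in `|β|`
on `β > -1`, `β ≠ 0`, and its derivative with respect to `|β|` equals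
`|β|(2+β) / (4·Var(T)²·(1+β)⁴) > 0`. -/
theorem explained_variation_increasing_in_abs_beta
    (VarE VarT Ω2 : ℝ → ℝ)
    (hVarE : ∀ β, VarE β = (1/4) * (1 - 1/(1+β))^2)
    (hVarT : ∀ β, VarT β = (1/2) * (1 + 1/(1+β)^2) + (1/4) * (1 - 1/(1+β))^2)
    (hΩ : ∀ β, Ω2 β = VarE β / VarT β) :
    (∀ β₁ β₂ : ℝ, -1 < β₁ → -1 < β₂ → β₁ * β₂ ≥ 0 → |β₁| < |β₂| → Ω2 β₁ < Ω2 β₂) ∧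
    (∀ β : ℝ, -1 < β → β ≠ 0 →
      HasDerivAt Ω2
        (Real.sign β * (|β| * (2 + β) / (4 * (VarT β)^2 * (1+β)^4))) β ∧
      0 < |β| * (2 + β) / (4 * (VarT β)^2 * (1+β)^4)) := by
  obtain rfl : VarE = varCondMean := funext hVarE
  obtain rfl : VarT = varTotal := funext hVarT
  obtain rfl : Ω2 = explainedVariation := funext hΩ
  refine ⟨fun _ _ => explainedVariation_lt_of_abs_lt, fun β hβ hβ0 => ⟨?_, ?_⟩⟩
  · rw [← div_quadratic_sq_eq_sign_mul_abs_div_varTotal (by linarith)]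
    exact hasDerivAt_explainedVariation (by linarith)
  · have := varTotal_pos (β := β) (by linarith)
    have := abs_pos.2 hβ0
    have : 0 < 1 + β := by linarith
    have : 0 < 2 + β := by linarith
    positivity
end

section
/- For the additive hazards model λ(t|Z) = 1 + βZ with Z ~ Bernoulli(1/2), the limit of the explained variation as β → ∞ is 1/3: lim_{β→∞} Ω²(β) = 1/3. -/
open Filter Topology

/-! In terms of `u = 1/(1+β)`, the mean of `T` given `Z = 1`, the explained variation is a
rational function of `u` whose denominator never vanishes. Since `u → 0` as `β → ∞`, the limit
is its value at `u = 0`, namely `(1/4) / (1/2 + 1/4) = 1/3`. -/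

/-- `Var(E[T|Z]) / Var(T)` when the conditional means of `T` are `1` and `u` and the
conditional variances their squares, as for exponential laws. -/
noncomputable def explainedVariationOfMean (u : ℝ) : ℝ :=
  (1/4) * (1 - u)^2 / ((1/2) * (1 + u^2) + (1/4) * (1 - u)^2)

lemma explainedVariationOfMean_denom_pos (u : ℝ) :
    0 < (1/2) * (1 + u^2) + (1/4) * (1 - u)^2 := by
  positivity

lemma continuous_explainedVariationOfMean : Continuous explainedVariationOfMean :=
  Continuous.div (by fun_prop) (by fun_prop) fun u ↦ (explainedVariationOfMean_denom_pos u).ne'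

lemma explainedVariationOfMean_zero : explainedVariationOfMean 0 = 1/3 := by
  norm_num [explainedVariationOfMean]

lemma tendsto_one_div_one_add_atTop_zero :
    Tendsto (fun β : ℝ ↦ 1 / (1 + β)) atTop (𝓝 0) :=
  tendsto_const_nhds.div_atTop (tendsto_atTop_add_const_left atTop 1 tendsto_id)

lemma tendsto_explainedVariationOfMean_one_div_one_add :
    Tendsto (fun β : ℝ ↦ explainedVariationOfMean (1 / (1 + β))) atTop (𝓝 (1/3)) := by
  rw [← explainedVariationOfMean_zero]
  exact (continuous_explainedVariationOfMean.tendsto 0).comp tendsto_one_div_one_add_atTop_zero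

/-- For the additive hazards model `λ(t|Z) = 1 + βZ` with `Z ~ Bernoulli(1/2)`
(so `T|Z=0 ~ Exp(1)`, `T|Z=1 ~ Exp(1+β)`), the explained variation
`Ω²(β) = Var(E[T|Z]) / Var(T)` tends to `1/3` as `β → ∞`. -/
theorem explained_variation_limit_one_third
    (VarE VarT Ω2 : ℝ → ℝ)
    (hVarE : ∀ β, VarE β = (1/4) * (1 - 1/(1+β))^2)
    (hVarT : ∀ β, VarT β = (1/2) * (1 + 1/(1+β)^2) + (1/4) * (1 - 1/(1+β))^2)
    (hΩ : ∀ β, Ω2 β = VarE β / VarT β) :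
    Tendsto Ω2 atTop (nhds (1/3)) := by
  have hΩ_eq : Ω2 = fun β ↦ explainedVariationOfMean (1 / (1 + β)) := by
    funext β
    rw [hΩ, hVarE, hVarT, explainedVariationOfMean, div_pow, one_pow]
  rw [hΩ_eq]
  exact tendsto_explainedVariationOfMean_one_div_one_add
end

section
/- For a binary covariate Z ~ Bernoulli(1/2) and additive hazards model λ(t|Z) = λ₀(t) + βZ with T|Z=0 having finite second moment, lim_{β→∞} Ω²(β) = 1 - (1/2)[2∫₀^∞ t e^{-Λ₀(t)}dt - (∫₀^∞ e^{-Λ₀(t)}dt)²] / [∫₀^∞ t e^{-Λ₀(t)}dt - (1/4)(∫₀^∞ e^{-Λ₀(t)}dt)²]. -/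
open MeasureTheory Real Set Filter

/-!
As `β → ∞` the survival function `e^{-Λ₀(t) - βt}` of the group `Z = 1` tends to `0` under the
integrable majorant `e^{-Λ₀(t)}`, so its first and second moments vanish in the limit (dominated
convergence) and `Ω²(β)` tends to the value obtained by setting them to `0`. The only point is that
the limiting denominator `M₁ - M₀²/4` does not vanish. Since `0 ≤ e^{-Λ₀} ≤ 1`, the bathtub
principle gives `∫₀^∞ t e^{-Λ₀(t)} dt ≥ ∫₀^{M₀} t dt = M₀²/2`, and `M₀ > 0`.
-/

lemma aestronglyMeasurable_of_mul_id {f : ℝ → ℝ}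
    (htf : AEStronglyMeasurable (fun t => t * f t) (volume.restrict (Ioi 0))) :
    AEStronglyMeasurable f (volume.restrict (Ioi 0)) := by
  refine (measurable_inv.aestronglyMeasurable.mul htf).congr ?_
  filter_upwards [self_mem_ae_restrict measurableSet_Ioi] with t (ht : 0 < t)
  simp [ht.ne']

lemma integrableOn_Ioi_of_norm_le_of_integrableOn_mul_id {f : ℝ → ℝ} {C : ℝ}
    (hbound : ∀ t ∈ Ioi (0 : ℝ), ‖f t‖ ≤ C)
    (htf : IntegrableOn (fun t => t * f t) (Ioi 0)) :
    IntegrableOn f (Ioi 0) := by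
  have hmeas := aestronglyMeasurable_of_mul_id htf.aestronglyMeasurable
  rw [← Ioc_union_Ioi_eq_Ioi zero_le_one]
  refine IntegrableOn.union ?_ ?_
  · refine (integrableOn_const (C := C) (by simp)).mono' (hmeas.mono_set Ioc_subset_Ioi_self) ?_
    filter_upwards [self_mem_ae_restrict measurableSet_Ioc] with t ht using hbound t ht.1
  · refine (htf.mono_set (Ioi_subset_Ioi zero_le_one)).norm.mono'
      (hmeas.mono_set (Ioi_subset_Ioi zero_le_one)) ?_
    filter_upwards [self_mem_ae_restrict measurableSet_Ioi] with t (ht : 1 < t)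
    rw [norm_mul, Real.norm_of_nonneg (show 0 ≤ t by linarith)]
    exact le_mul_of_one_le_left (norm_nonneg _) ht.le

/-- Bathtub principle: among densities `0 ≤ f ≤ 1` of given mass `m` on `(0, ∞)`, the first
moment is smallest for the indicator of `(0, m]`. -/
lemma sq_setIntegral_le_two_mul_setIntegral_mul_id {f : ℝ → ℝ}
    (hf0 : ∀ t ∈ Ioi (0 : ℝ), 0 ≤ f t) (hf1 : ∀ t ∈ Ioi (0 : ℝ), f t ≤ 1)
    (hf : IntegrableOn f (Ioi 0)) (htf : IntegrableOn (fun t => t * f t) (Ioi 0)) :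
    (∫ t in Ioi 0, f t) ^ 2 ≤ 2 * ∫ t in Ioi 0, t * f t := by
  set m := ∫ t in Ioi 0, f t
  have hm : 0 ≤ m := setIntegral_nonneg measurableSet_Ioi hf0
  have hbox : IntegrableOn ((Ioc 0 m).indicator fun t => t - m) (Ioi 0) :=
    ((continuous_id.sub continuous_const).integrableOn_Icc.mono_set Ioc_subset_Icc_self
      |>.integrable_indicator measurableSet_Ioc).integrableOn
  have hbox_int : ∫ t in Ioi 0, (Ioc 0 m).indicator (fun t => t - m) t = -(m ^ 2 / 2) := by
    rw [setIntegral_indicator measurableSet_Ioc, inter_eq_right.2 Ioc_subset_Ioi_self,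
      ← intervalIntegral.integral_of_le hm,
      intervalIntegral.integral_sub intervalIntegral.intervalIntegrable_id intervalIntegrable_const,
      integral_id, intervalIntegral.integral_const]
    simp only [smul_eq_mul]
    ring
  have hmoment : ∫ t in Ioi 0, (t - m) * f t = (∫ t in Ioi 0, t * f t) - m * m := by
    simp_rw [sub_mul]
    rw [integral_sub htf (hf.const_mul m), integral_const_mul]
  have hle : ∫ t in Ioi 0, (Ioc 0 m).indicator (fun t => t - m) t ≤
      ∫ t in Ioi 0, (t - m) * f t := by
    have hmoment_int : IntegrableOn (fun t => (t - m) * f t) (Ioi 0) :=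
      (htf.sub (hf.const_mul m)).congr_fun (fun t _ => by simp only [Pi.sub_apply]; ring)
        measurableSet_Ioi
    refine setIntegral_mono_on hbox hmoment_int measurableSet_Ioi fun t ht => ?_
    by_cases htm : t ∈ Ioc 0 m
    · rw [indicator_of_mem htm]
      nlinarith [htm.2, hf1 t ht]
    · rw [indicator_of_notMem htm]
      have : m < t := by simpa [mem_Ioc, ht.out] using htm
      exact mul_nonneg (by linarith) (hf0 t ht)
  linarith

lemma tendsto_setIntegral_mul_exp_neg_mul_atTop {g : ℝ → ℝ} (hg : IntegrableOn g (Ioi 0)) :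
    Tendsto (fun β => ∫ t in Ioi 0, g t * exp (-(β * t))) atTop (nhds 0) := by
  have hdct := tendsto_integral_filter_of_dominated_convergence (μ := volume.restrict (Ioi 0))
    (l := atTop) (F := fun β t => g t * exp (-(β * t))) (f := fun _ => 0) (fun t => ‖g t‖)
    (Eventually.of_forall fun β => hg.aestronglyMeasurable.mul (by fun_prop))
    ?_ hg.norm ?_
  · simpa using hdct
  · filter_upwards [eventually_ge_atTop 0] with β hβ
    filter_upwards [self_mem_ae_restrict measurableSet_Ioi] with t (ht : 0 < t)
    rw [norm_mul, Real.norm_of_nonneg (exp_pos _).le]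
    exact mul_le_of_le_one_right (norm_nonneg _) (exp_le_one_iff.2 (by nlinarith))
  · filter_upwards [self_mem_ae_restrict measurableSet_Ioi] with t (ht : 0 < t)
    simpa using (tendsto_exp_atBot.comp (tendsto_neg_atTop_atBot.comp
      (tendsto_id.atTop_mul_const ht))).const_mul (g t)

theorem explained_variation_limit_binary_general
    (Lam0 : ℝ → ℝ) (hnonneg : ∀ t, 0 ≤ Lam0 t)
    (hfin : IntegrableOn (fun t => t * Real.exp (-Lam0 t)) (Ioi 0))
    (M0 M1 : ℝ)
    (hM0 : M0 = ∫ t in Ioi (0:ℝ), Real.exp (-Lam0 t))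
    (hM1 : M1 = ∫ t in Ioi (0:ℝ), t * Real.exp (-Lam0 t))
    (m1 s1 EVar VarT Ω2 : ℝ → ℝ)
    (hm1 : ∀ β, m1 β = ∫ t in Ioi (0:ℝ), Real.exp (-Lam0 t - β * t))
    (hs1 : ∀ β, s1 β = ∫ t in Ioi (0:ℝ), 2 * t * Real.exp (-Lam0 t - β * t))
    (hEVar : ∀ β, EVar β = (1/2) * ((2 * M1 - M0^2) + (s1 β - (m1 β)^2)))
    (hVarT : ∀ β, VarT β = (1/2) * (2 * M1 + s1 β) - ((1/2) * (M0 + m1 β))^2)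
    (hΩ : ∀ β, Ω2 β = 1 - EVar β / VarT β) :
    Tendsto Ω2 atTop
      (nhds (1 - (1/2) * (2 * M1 - M0^2) / (M1 - (1/4) * M0^2))) := by
  have hS_le_one (t : ℝ) : exp (-Lam0 t) ≤ 1 := exp_le_one_iff.2 (neg_nonpos.2 (hnonneg t))
  have hS : IntegrableOn (fun t => exp (-Lam0 t)) (Ioi 0) :=
    integrableOn_Ioi_of_norm_le_of_integrableOn_mul_id
      (fun t _ => by rw [Real.norm_of_nonneg (exp_pos _).le]; exact hS_le_one t) hfin
  have hm : Tendsto m1 atTop (nhds 0) :=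
    (tendsto_setIntegral_mul_exp_neg_mul_atTop hS).congr fun β => by
      simp only [hm1, sub_eq_add_neg, exp_add]
  have hs : Tendsto s1 atTop (nhds 0) :=
    (tendsto_setIntegral_mul_exp_neg_mul_atTop (hfin.const_mul 2)).congr fun β => by
      simp only [hs1, sub_eq_add_neg, exp_add, mul_assoc]
  have : NeZero (volume.restrict (Ioi (0 : ℝ))) := ⟨by simp [Measure.restrict_eq_zero]⟩
  have hM0_pos : 0 < M0 := hM0 ▸ integral_exp_pos hS
  have hM0_sq : M0 ^ 2 ≤ 2 * M1 := hM0 ▸ hM1 ▸ sq_setIntegral_le_two_mul_setIntegral_mul_id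
    (fun t _ => (exp_pos _).le) (fun t _ => hS_le_one t) hS hfin
  have hE : Tendsto EVar atTop (nhds ((1/2) * ((2 * M1 - M0^2) + (0 - 0^2)))) :=
    ((tendsto_const_nhds.add (hs.sub (hm.pow 2))).const_mul _).congr fun β => (hEVar β).symm
  have hV : Tendsto VarT atTop (nhds ((1/2) * (2 * M1 + 0) - ((1/2) * (M0 + 0))^2)) :=
    (((tendsto_const_nhds.add hs).const_mul _).sub
      (((tendsto_const_nhds.add hm).const_mul _).pow 2)).congr fun β => (hVarT β).symm
  have hV_ne : (1/2) * (2 * M1 + 0) - ((1/2) * (M0 + 0))^2 ≠ 0 := by nlinarith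
  have hlim := (tendsto_const_nhds (x := (1 : ℝ))).sub (hE.div hV hV_ne)
  convert hlim.congr fun β => (hΩ β).symm using 2
  ring

/-- For a binary covariate `Z ~ Bernoulli(1/2)` and the additive hazards model
`λ(t|Z) = λ₀(t) + βZ` (so `S(t|Z=0) = e^{-Λ₀(t)}` and `S(t|Z=1) = e^{-Λ₀(t)-βt}`), with
`T|Z=0` having finite second moment, the explained variation
`Ω²(β) = 1 - E[Var(T|Z)] / Var(T)` satisfies
`lim_{β→∞} Ω²(β) = 1 - (1/2)[2∫₀^∞ t e^{-Λ₀}dt - (∫₀^∞ e^{-Λ₀}dt)²] /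
[∫₀^∞ t e^{-Λ₀}dt - (1/4)(∫₀^∞ e^{-Λ₀}dt)²]`. -/
theorem explained_variation_limit_binary
    (Lam0 : ℝ → ℝ) (hmeas : Measurable Lam0) (hnonneg : ∀ t, 0 ≤ Lam0 t)
    (hfin : IntegrableOn (fun t => t * Real.exp (-Lam0 t)) (Ioi 0))
    (M0 M1 : ℝ)
    (hM0 : M0 = ∫ t in Ioi (0:ℝ), Real.exp (-Lam0 t))
    (hM1 : M1 = ∫ t in Ioi (0:ℝ), t * Real.exp (-Lam0 t))
    (m1 s1 EVar VarT Ω2 : ℝ → ℝ)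
    (hm1 : ∀ β, m1 β = ∫ t in Ioi (0:ℝ), Real.exp (-Lam0 t - β * t))
    (hs1 : ∀ β, s1 β = ∫ t in Ioi (0:ℝ), 2 * t * Real.exp (-Lam0 t - β * t))
    (hEVar : ∀ β, EVar β = (1/2) * ((2 * M1 - M0^2) + (s1 β - (m1 β)^2)))
    (hVarT : ∀ β, VarT β = (1/2) * (2 * M1 + s1 β) - ((1/2) * (M0 + m1 β))^2)
    (hΩ : ∀ β, Ω2 β = 1 - EVar β / VarT β) :
    Tendsto Ω2 atTop
      (nhds (1 - (1/2) * (2 * M1 - M0^2) / (M1 - (1/4) * M0^2))) :=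
  explained_variation_limit_binary_general Lam0 hnonneg hfin M0 M1 hM0 hM1 m1 s1 EVar VarT Ω2 hm1
    hs1 hEVar hVarT hΩ
end
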